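/- Let G be a graph with chromatic number χ(G) ≤ m+1 and let H be any graph on m vertices. Then for every l ≥ 1, the equitable chromatic number of the l-fold corona satisfies χ_=(G ∘^l H) ≤ m+1. -/

import Mathlib

open SimpleGraph Finset

/-- The corona `G ∘ H` of two graphs: one copy of `G` and `|V(G)|` copies of `H`,
the `i`-th vertex of `G` being joined to every vertex of the `i`-th copy of `H`. -/
def SimpleGraph.corona {α β : Type*} (G : SimpleGraph α) (H : SimpleGraph β) :
    SimpleGraph (α ⊕ α × β) where
  Adj x y :=
    match x, y with
    | Sum.inl u, Sum.inl v => G.Adj u v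
    | Sum.inl u, Sum.inr (v, _) => u = v
    | Sum.inr (u, _), Sum.inl v => u = v
    | Sum.inr (u, a), Sum.inr (v, b) => u = v ∧ H.Adj a b
  symm := by
    constructor
    rintro (u | ⟨u, a⟩) (v | ⟨v, b⟩) h
    · exact h.symm
    · exact h.symm
    · exact h.symm
    · exact ⟨h.1.symm, h.2.symm⟩
  loopless := by
    constructor
    rintro (u | ⟨u, a⟩) h
    · exact G.loopless.irrefl u h
    · exact H.loopless.irrefl a h.2

universe u

/-- Vertex type of the `l`-fold corona `G ∘^l H` (with `l = 0` giving `G` itself). -/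
def coronaType (α β : Type u) : ℕ → Type u
  | 0 => α
  | l + 1 => coronaType α β l ⊕ coronaType α β l × β

instance coronaType.fintype (α β : Type u) [Fintype α] [Fintype β] :
    ∀ l, Fintype (coronaType α β l)
  | 0 => inferInstanceAs (Fintype α)
  | l + 1 =>
    letI := coronaType.fintype α β l
    inferInstanceAs (Fintype (coronaType α β l ⊕ coronaType α β l × β))

/-- The `l`-fold corona `G ∘^l H`, defined by `G ∘^0 H = G` and
`G ∘^(l+1) H = (G ∘^l H) ∘ H`. -/
def coronaPow {α β : Type u} (G : SimpleGraph α) (H : SimpleGraph β) :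
    ∀ l, SimpleGraph (coronaType α β l)
  | 0 => G
  | l + 1 => (coronaPow G H l).corona H

/-- The canonical copy of a vertex of `G` inside `G ∘^l H`. -/
def coronaBase {α : Type u} (β : Type u) : ∀ l, α → coronaType α β l
  | 0 => id
  | l + 1 => fun a => Sum.inl (coronaBase β l a)

/-- `c` is an equitable `k`-coloring of `G`: it is proper and any two color classes
differ in size by at most one. -/
def SimpleGraph.IsEquitableColoring {V : Type*} [Fintype V] (G : SimpleGraph V) {k : ℕ}
    (c : V → Fin k) : Prop :=
  (∀ ⦃u v⦄, G.Adj u v → c u ≠ c v) ∧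
    ∀ i j : Fin k,
      (Finset.univ.filter fun v => c v = i).card ≤
        (Finset.univ.filter fun v => c v = j).card + 1

/-- `G` is equitably `k`-colorable. -/
def SimpleGraph.EquitablyColorable {V : Type*} [Fintype V] (G : SimpleGraph V) (k : ℕ) : Prop :=
  ∃ c : V → Fin k, G.IsEquitableColoring c

/-- The equitable chromatic number: the least `k` such that `G` is equitably `k`-colorable. -/
noncomputable def SimpleGraph.equitableChromaticNumber {V : Type*} [Fintype V]
    (G : SimpleGraph V) : ℕ :=
  sInf {k | G.EquitablyColorable k}

/-- The maximum degree of a finite graph (no decidability assumptions). -/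
noncomputable def SimpleGraph.maxDeg {V : Type*} [Fintype V] (G : SimpleGraph V) : ℕ :=
  Finset.univ.sup fun v => (G.neighborSet v).ncard

/-! Extend a proper coloring `c` of `G` with `|V(H)| + 1` colors to `G ∘ H` by coloring the block
formed by a vertex `u` of `G` and its copy of `H` bijectively with all colors, `u` keeping `c u`
(the block is indexed by `Option β`, `none` standing for `u`). Since `u` is adjacent to its whole block and
copies of `H` only meet inside a block, this is proper; every color occurs exactly once per block,
so all color classes have size `|V(G)|`. Iterating keeps a proper coloring of `G ∘^l H`, and one
more corona step makes it equitable. -/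

variable {α β K : Type*}

lemma card_filter_equiv_apply_eq [Fintype α] [Fintype β] [DecidableEq K] (σ : α → β ≃ K)
    (k : K) : #{p : β × α | σ p.2 p.1 = k} = Fintype.card α := by
  rw [← Fintype.card_subtype]
  exact Fintype.card_congr
    { toFun := fun p => p.1.2
      invFun := fun a => ⟨((σ a).symm k, a), by simp⟩
      left_inv := fun ⟨(b, a), h⟩ => by simp [← h]
      right_inv := fun _ => rfl }

lemma exists_optionEquiv_apply_none_eq [Fintype β] [Fintype K] [DecidableEq K]
    (h : Fintype.card K = Fintype.card β + 1) (k : K) : ∃ σ : Option β ≃ K, σ none = k := by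
  have : Fintype.card β = Fintype.card {j // j ≠ k} := by
    simp [Fintype.card_subtype_compl, h]
  exact ⟨(Equiv.optionCongr (Fintype.equivOfCardEq this)).trans (Equiv.optionSubtypeNe k), rfl⟩

namespace SimpleGraph

def coronaBlockEquiv : Option β × α ≃ α ⊕ α × β :=
  optionProdEquiv.trans (Equiv.sumCongr (Equiv.refl α) (Equiv.prodComm β α))

variable {G : SimpleGraph α} (H : SimpleGraph β) (c : G.Coloring K) {σ : K → Option β ≃ K}

def Coloring.corona (hσ : ∀ k, σ k none = k) : (G.corona H).Coloring K :=
  Coloring.mk (Sum.elim c fun p => σ (c p.1) (some p.2)) <| by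
    have hσ_some (u : α) (b : β) : c u ≠ σ (c u) (some b) := fun h =>
      nomatch (σ (c u)).injective ((hσ (c u)).trans h)
    rintro (u | ⟨u, a⟩) (v | ⟨v, b⟩) h
    · exact c.valid h
    · obtain rfl : u = v := h
      exact hσ_some u b
    · obtain rfl : u = v := h
      exact (hσ_some u a).symm
    · obtain ⟨rfl, hab⟩ : u = v ∧ H.Adj a b := h
      simpa using hab.ne

variable (hσ : ∀ k, σ k none = k)

lemma Coloring.corona_apply_coronaBlockEquiv (o : Option β) (u : α) :
    c.corona H hσ (coronaBlockEquiv (o, u)) = σ (c u) o := by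
  cases o
  · exact (hσ (c u)).symm
  · rfl

lemma Coloring.card_filter_corona_eq [Fintype α] [Fintype β] [DecidableEq K] (k : K) :
    #{x | c.corona H hσ x = k} = Fintype.card α := by
  rw [← Fintype.card_subtype, ← card_filter_equiv_apply_eq (fun u => σ (c u)) k,
    ← Fintype.card_subtype]
  exact Fintype.card_congr (coronaBlockEquiv.subtypeEquiv fun p => by
    rw [c.corona_apply_coronaBlockEquiv]).symm

lemma EquitablyColorable.colorable {V : Type*} [Fintype V] {G : SimpleGraph V} {k : ℕ}
    (h : G.EquitablyColorable k) : G.Colorable k :=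
  let ⟨c, hc⟩ := h
  ⟨Coloring.mk c fun h => hc.1 h⟩

lemma equitablyColorable_corona [Fintype α] [Fintype β]
    (hG : G.Colorable (Fintype.card β + 1)) :
    (G.corona H).EquitablyColorable (Fintype.card β + 1) := by
  obtain ⟨c⟩ := hG
  choose σ hσ using exists_optionEquiv_apply_none_eq (Fintype.card_fin (Fintype.card β + 1))
  refine ⟨c.corona H hσ, fun _ _ h => (c.corona H hσ).valid h, fun i j => ?_⟩
  rw [c.card_filter_corona_eq, c.card_filter_corona_eq]
  exact Nat.le_succ _

lemma colorable_coronaPow {α β : Type u} [Fintype α] [Fintype β] {G : SimpleGraph α}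
    (H : SimpleGraph β) (hG : G.Colorable (Fintype.card β + 1)) :
    ∀ l, (coronaPow G H l).Colorable (Fintype.card β + 1)
  | 0 => hG
  | l + 1 => (equitablyColorable_corona H (colorable_coronaPow H hG l)).colorable

end SimpleGraph

/-- If `χ(G) ≤ m+1` and `H` has `m` vertices then
`χ₌(G ∘^l H) ≤ m+1` for all `l ≥ 1`. -/
theorem equitableChromaticNumber_coronaPow_le
    {α β : Type} [Fintype α] [Fintype β] (G : SimpleGraph α) (H : SimpleGraph β)
    (m l : ℕ) (hm : Fintype.card β = m) (hG : G.Colorable (m + 1)) (hl : 1 ≤ l) :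
    (coronaPow G H l).equitableChromaticNumber ≤ m + 1 := by
  subst hm
  obtain ⟨l, rfl⟩ := Nat.exists_eq_add_of_le' hl
  exact Nat.sInf_le (equitablyColorable_corona H (colorable_coronaPow H hG l))
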